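/- For every n ≥ 1, the FDFA F_n defined as follows is saturated and characterizes L_n: over Σ = {1,…,n}, L_n is the set of infinite words w such that (a) every letter i is followed by a letter j ≤ i+1, and (b) the number of letters occurring infinitely often in w is odd. The leading automaton of F_n has states {⊥, q₁,…,q_n}, initial state q_n, transitions δ(q_i, j) = q_j if j ≤ i+1 and ⊥ otherwise, δ(⊥, j) = ⊥. The progress DFA at ⊥ is a single rejecting sink. The progress DFA at each q_i has states [1..n] × [1..n], initial state (n,1), transitions ((s,b), σ) ↦ (min(s,σ), max(b,σ)), and accepting states {(s,b) : b − s is even}. Then for every (u,v) ∈ Σ* × Σ⁺, (u,v) is accepted by F_n iff u·v^ω ∈ L_n. -/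

import Mathlib

open Classical

/-- `wpow v n` is the word `v` repeated `n` times. -/
def wpow {α : Type} (v : List α) : ℕ → List α
  | 0 => []
  | n + 1 => wpow v n ++ v

/-- The ultimately periodic infinite word `u·v^ω` (meaningful when `v ≠ []`). -/
def upWord {α : Type} [Inhabited α] (u v : List α) : ℕ → α := fun n =>
  if n < u.length then u.getD n default
  else v.getD ((n - u.length) % v.length) default

/-- `l` is a prefix of the infinite word `w`. -/
def prefOf {α : Type} [Inhabited α] (l : List α) (w : ℕ → α) : Prop :=
  ∀ i < l.length, w i = l.getD i default

/-- A complete deterministic automaton (no acceptance condition). -/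
structure DetAuto (α : Type) : Type 1 where
  State : Type
  [fin : Fintype State]
  init : State
  step : State → α → State

attribute [instance] DetAuto.fin

namespace DetAuto

variable {α : Type}

/-- The state reached from `q` after reading the finite word `w`. -/
def run (A : DetAuto α) (q : A.State) (w : List α) : A.State := w.foldl A.step q

/-- The state reached from the initial state after reading `w`. -/
def eval (A : DetAuto α) (w : List α) : A.State := A.run A.init w

/-- The (infinite) run of `A` on an infinite word `w`. -/
def runSeq (A : DetAuto α) (w : ℕ → α) : ℕ → A.State
  | 0 => A.init
  | n + 1 => A.step (A.runSeq w n) (w n)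

lemma exists_rep (A : DetAuto α) (u v : List α) :
    ∃ i, ∃ j, 1 ≤ j ∧ A.eval (u ++ wpow v i) = A.eval (u ++ wpow v (i + j)) := by
  obtain ⟨a, b, hab, hfab⟩ :=
    Finite.exists_ne_map_eq_of_infinite (fun n : ℕ => A.eval (u ++ wpow v n))
  rcases Nat.lt_or_gt_of_ne hab with h | h
  · exact ⟨a, b - a, by omega, by rw [Nat.add_sub_cancel' h.le]; exact hfab⟩
  · exact ⟨b, a - b, by omega, by rw [Nat.add_sub_cancel' h.le]; exact hfab.symm⟩

/-- The least `i` in the normalization of `(u,v)` w.r.t. `A`. -/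
noncomputable def normI (A : DetAuto α) (u v : List α) : ℕ :=
  Nat.find (A.exists_rep u v)

lemma normI_spec (A : DetAuto α) (u v : List α) :
    ∃ j, 1 ≤ j ∧ A.eval (u ++ wpow v (A.normI u v))
      = A.eval (u ++ wpow v (A.normI u v + j)) :=
  Nat.find_spec (A.exists_rep u v)

/-- The least `j` in the normalization of `(u,v)` w.r.t. `A`. -/
noncomputable def normJ (A : DetAuto α) (u v : List α) : ℕ :=
  Nat.find (A.normI_spec u v)

/-- The normalization `(x, y) = (u·v^i, v^j)` of `(u,v)` w.r.t. `A`. -/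
noncomputable def normalize (A : DetAuto α) (u v : List α) : List α × List α :=
  (u ++ wpow v (A.normI u v), wpow v (A.normJ u v))

/-- The product automaton. -/
def prod (A B : DetAuto α) : DetAuto α where
  State := A.State × B.State
  init := (A.init, B.init)
  step := fun p σ => (A.step p.1 σ, B.step p.2 σ)

end DetAuto

/-- A family of DFAs: a leading automaton and a progress DFA for each of its states. -/
structure FDFA (α : Type) : Type 1 where
  leading : DetAuto α
  pState : leading.State → Type
  [pFin : ∀ q, Fintype (pState q)]
  pInit : ∀ q, pState q
  pStep : ∀ q, pState q → α → pState q
  pAcc : ∀ q, Set (pState q)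

attribute [instance] FDFA.pFin

namespace FDFA

variable {α : Type}

/-- The progress DFA at state `q` accepts the finite word `y`. -/
def progAccept (F : FDFA α) (q : F.leading.State) (y : List α) : Prop :=
  y.foldl (F.pStep q) (F.pInit q) ∈ F.pAcc q

/-- `F` accepts the pair `(u, v)`: with `(x,y)` the normalization of `(u,v)` w.r.t.
the leading automaton, the progress DFA at the state reached on `x` accepts `y`. -/
noncomputable def Accept (F : FDFA α) (u v : List α) : Prop :=
  F.progAccept (F.leading.eval (F.leading.normalize u v).1) (F.leading.normalize u v).2

/-- `F` is saturated: acceptance of `(u,v)` depends only on the infinite word `u·v^ω`. -/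
def Saturated [Inhabited α] (F : FDFA α) : Prop :=
  ∀ u v u' v' : List α, v ≠ [] → v' ≠ [] → upWord u v = upWord u' v' →
    (F.Accept u v ↔ F.Accept u' v')

/-- The complement FDFA: same structure, complemented accepting states. -/
def compl (F : FDFA α) : FDFA α :=
  { F with pAcc := fun q => (F.pAcc q)ᶜ }

end FDFA

/-- The letter `a : Fin n` represents the number `a.val + 1 ∈ {1,…,n}`. A word is in
`LnSet n` iff every letter `i` is followed by a letter `j ≤ i + 1` and the number of
letters occurring infinitely often is odd. -/
def LnSet (n : ℕ) : Set (ℕ → Fin n) :=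
  {w | (∀ p : ℕ, (w (p + 1)).val ≤ (w p).val + 1) ∧
    Odd (Set.ncard {a : Fin n | {p : ℕ | w p = a}.Infinite})}

/-- States of the progress DFAs of `FnFdfa`: a rejecting sink at `⊥`, and pairs
`(s, b) ∈ [1..n] × [1..n]` (encoded in `Fin n`) elsewhere. -/
def FnP (n : ℕ) : Option (Fin n) → Type
  | none => PUnit
  | some _ => Fin n × Fin n

instance FnP.fintype (n : ℕ) (q : Option (Fin n)) : Fintype (FnP n q) :=
  match q with
  | none => inferInstanceAs (Fintype PUnit)
  | some _ => inferInstanceAs (Fintype (Fin n × Fin n))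

/-- The leading automaton of `F_n`: states `{⊥} ∪ {q₁,…,q_n}` (state `q_i` encoded as
`some ⟨i-1⟩`, `⊥` as `none`), initial state `q_n`, with `δ(q_i, j) = q_j` if
`j ≤ i + 1` and `⊥` otherwise, and `δ(⊥, j) = ⊥`. -/
def FnLead (n : ℕ) (hn : 0 < n) : DetAuto (Fin n) where
  State := Option (Fin n)
  init := some ⟨n - 1, by omega⟩
  step := fun q j =>
    match q with
    | none => none
    | some i => if j.val ≤ i.val + 1 then some j else none

/-- The FDFA `F_n` for `L_n`: the progress DFA at `⊥` is a rejecting sink, and at each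
`q_i` it tracks the smallest and biggest letters `(s, b)` read so far (initially
`(n, 1)`), accepting iff `b − s` is even. -/
def FnFdfa (n : ℕ) (hn : 0 < n) : FDFA (Fin n) where
  leading := FnLead n hn
  pState := FnP n
  pFin := fun q => FnP.fintype n q
  pInit := fun q =>
    match q with
    | none => PUnit.unit
    | some _ => ((⟨n - 1, by omega⟩ : Fin n), (⟨0, hn⟩ : Fin n))
  pStep := fun q =>
    match q with
    | none => fun p _ => p
    | some _ => fun p σ => (min p.1 σ, max p.2 σ)
  pAcc := fun q =>
    match q with
    | none => ∅
    | some _ => {p : Fin n × Fin n | Even (p.2.val - p.1.val)}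

/-! The letters occurring infinitely often in `u·v^ω` are those of `v`. If the word never
rises by more than one, they form the interval `[s, b]` between the least and the greatest
letter of `v` (a discrete intermediate value theorem between an occurrence of `s` and a later
one of `b` in the periodic part), so `u·v^ω ∈ L_n` iff `b - s` is even. This is what the
progress DFA computes, because the normalized period `y = v^j` has the same letters as `v`.
The leading automaton dies exactly on a forbidden rise, and since the normalization `(x, y)`
satisfies `δ(x) = δ(x·y^k)` for every `k`, a rise anywhere in `u·v^ω` already sends `x` to
`⊥`, where everything is rejected. Acceptance thus depends only on `u·v^ω`, which gives
saturation. -/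

theorem Nat.exists_mem_Icc_eq_of_succ_le {f : ℕ → ℕ} (hf : ∀ p, f (p + 1) ≤ f p + 1)
    {a b c : ℕ} (hab : a ≤ b) (ha : f a ≤ c) (hb : c ≤ f b) :
    ∃ p ∈ Set.Icc a b, f p = c := by
  induction b, hab using Nat.le_induction with
  | base => exact ⟨a, ⟨le_rfl, le_rfl⟩, by omega⟩
  | succ b hab ih =>
    by_cases h : c ≤ f b
    · obtain ⟨p, hp, hpc⟩ := ih h
      exact ⟨p, ⟨hp.1, hp.2.trans b.le_succ⟩, hpc⟩
    · exact ⟨b + 1, ⟨by omega, le_rfl⟩, by have := hf b; omega⟩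

theorem List.isChain_iff_of_prefOf {α : Type} [Inhabited α] {R : α → α → Prop} {l : List α}
    {w : ℕ → α} (h : prefOf l w) :
    l.IsChain R ↔ ∀ p, p + 1 < l.length → R (w p) (w (p + 1)) := by
  have hl : ∀ i (hi : i < l.length), l[i] = w i := fun i hi => by
    rw [h i hi, List.getD_eq_getElem]
  rw [List.isChain_iff_getElem]
  refine forall_congr' fun p => ⟨fun hR hp => ?_, fun hR hp => ?_⟩
  · rw [← hl p (by omega), ← hl (p + 1) hp]
    exact hR hp
  · rw [hl p (by omega), hl (p + 1) hp]
    exact hR hp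

section wpow

variable {α : Type}

theorem wpow_length (v : List α) (m : ℕ) : (wpow v m).length = m * v.length := by
  induction m with
  | zero => simp [wpow]
  | succ k ih => simp [wpow, ih, Nat.succ_mul]

theorem wpow_add (v : List α) (a b : ℕ) : wpow v (a + b) = wpow v a ++ wpow v b := by
  induction b with
  | zero => simp [wpow]
  | succ k ih => rw [← add_assoc, wpow, ih, wpow, List.append_assoc]

theorem wpow_wpow (v : List α) (a b : ℕ) : wpow (wpow v a) b = wpow v (a * b) := by
  induction b with
  | zero => simp [wpow]
  | succ k ih => rw [wpow, ih, Nat.mul_succ, wpow_add]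

theorem mem_wpow {v : List α} {a : α} {m : ℕ} (hm : m ≠ 0) : a ∈ wpow v m ↔ a ∈ v := by
  induction m with
  | zero => exact absurd rfl hm
  | succ k ih =>
    rcases eq_or_ne k 0 with rfl | hk
    · simp [wpow]
    · simp [wpow, ih hk]

theorem getD_wpow (v : List α) (d : α) {m p : ℕ} (hp : p < m * v.length) :
    (wpow v m).getD p d = v.getD (p % v.length) d := by
  induction m with
  | zero => omega
  | succ k ih =>
    rw [wpow]
    by_cases h : p < k * v.length
    · rw [List.getD_append _ _ _ _ (by rwa [wpow_length]), ih h]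
    · rw [List.getD_append_right _ _ _ _ (by rw [wpow_length]; omega), wpow_length]
      obtain ⟨r, rfl⟩ := Nat.exists_eq_add_of_le (not_lt.1 h)
      rw [Nat.succ_mul] at hp
      rw [Nat.add_sub_cancel_left, Nat.mul_add_mod_self_right, Nat.mod_eq_of_lt (by omega)]

end wpow

section upWord

variable {α : Type} [Inhabited α] (u v : List α)

theorem prefOf_append_wpow_upWord (m : ℕ) : prefOf (u ++ wpow v m) (upWord u v) := by
  intro p hp
  rw [List.length_append, wpow_length] at hp
  unfold upWord
  split_ifs with h
  · rw [List.getD_append _ _ _ _ h]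
  · rw [List.getD_append_right _ _ _ _ (by omega), getD_wpow _ _ (by omega)]

theorem upWord_mem {v : List α} (hv : v ≠ []) {p : ℕ} (hp : u.length ≤ p) :
    upWord u v p ∈ v := by
  have hmod := Nat.mod_lt (p - u.length) (List.length_pos_iff.2 hv)
  rw [upWord, if_neg (by omega), List.getD_eq_getElem _ _ hmod]
  exact List.getElem_mem hmod

theorem upWord_length_add {k : ℕ} (hk : k < v.length) (m : ℕ) :
    upWord u v (u.length + (m * v.length + k)) = v[k] := by
  rw [upWord, if_neg (by omega), Nat.add_sub_cancel_left, Nat.mul_add_mod_self_right,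
    Nat.mod_eq_of_lt hk, List.getD_eq_getElem]

theorem infinite_setOf_upWord_eq_iff {v : List α} (hv : v ≠ []) (a : α) :
    {p | upWord u v p = a}.Infinite ↔ a ∈ v := by
  refine ⟨fun h => ?_, fun ha => ?_⟩
  · obtain ⟨p, hp, hlt⟩ := h.exists_gt u.length
    exact hp ▸ upWord_mem u hv hlt.le
  · obtain ⟨k, hk, rfl⟩ := List.mem_iff_getElem.1 ha
    refine Set.infinite_of_injective_forall_mem (f := fun m => u.length + (m * v.length + k))
      (fun m m' h => ?_) (fun m => upWord_length_add u v hk m)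
    have hmul : m * v.length = m' * v.length := by simp only at h; omega
    exact Nat.eq_of_mul_eq_mul_right (by omega) hmul

end upWord

namespace DetAuto

variable {α : Type} (A : DetAuto α) (u v : List α)

theorem eval_append (l₁ l₂ : List α) : A.eval (l₁ ++ l₂) = A.run (A.eval l₁) l₂ :=
  List.foldl_append

theorem normJ_pos : 0 < A.normJ u v :=
  (Nat.find_spec (A.normI_spec u v)).1

theorem eval_normalize_append_wpow (k : ℕ) :
    A.eval ((A.normalize u v).1 ++ wpow (A.normalize u v).2 k) = A.eval (A.normalize u v).1 := by
  have hloop :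
      A.eval ((A.normalize u v).1 ++ (A.normalize u v).2) = A.eval (A.normalize u v).1 := by
    simp only [normalize]
    rw [List.append_assoc, ← wpow_add]
    exact (Nat.find_spec (A.normI_spec u v)).2.symm
  induction k with
  | zero => simp [wpow]
  | succ k ih => rw [wpow, ← List.append_assoc, eval_append, ih, ← eval_append, hloop]

theorem normalize_append_wpow (k : ℕ) :
    (A.normalize u v).1 ++ wpow (A.normalize u v).2 k
      = u ++ wpow v (A.normI u v + A.normJ u v * k) := by
  simp only [normalize]
  rw [wpow_wpow, wpow_add, List.append_assoc]

end DetAuto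

theorem List.foldl_min_max {β : Type} [LinearOrder β] (l : List β) (p : β × β) :
    l.foldl (fun p a => (min p.1 a, max p.2 a)) p = (l.foldl min p.1, l.foldl max p.2) := by
  induction l generalizing p with
  | nil => rfl
  | cons a l ih => exact ih (min p.1 a, max p.2 a)

section Fn

variable {n : ℕ} (hn : 0 < n)

theorem FnLead_run_none (w : List (Fin n)) : (FnLead n hn).run none w = none := by
  induction w with
  | nil => rfl
  | cons a w ih => exact ih

theorem FnLead_run_some_eq_none_iff (w : List (Fin n)) (i : Fin n) :
    (FnLead n hn).run (some i) w = none ↔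
      ¬ (i :: w).IsChain (fun a b : Fin n => b.val ≤ a.val + 1) := by
  induction w generalizing i with
  | nil => exact iff_of_false (Option.some_ne_none i) (by simp)
  | cons a w ih =>
    have hrun : (FnLead n hn).run (some i) (a :: w)
        = (FnLead n hn).run ((FnLead n hn).step (some i) a) w := rfl
    by_cases h : a.val ≤ i.val + 1
    · have hstep : (FnLead n hn).step (some i) a = some a := if_pos h
      rw [hrun, hstep, ih a, List.isChain_cons_cons]
      simp [h]
    · have hstep : (FnLead n hn).step (some i) a = none := if_neg h
      rw [hrun, hstep, FnLead_run_none, List.isChain_cons_cons]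
      exact iff_of_true rfl fun hc => h hc.1

theorem FnLead_eval_eq_none_iff (w : List (Fin n)) :
    (FnLead n hn).eval w = none ↔ ¬ w.IsChain (fun a b : Fin n => b.val ≤ a.val + 1) := by
  rw [DetAuto.eval, show (FnLead n hn).init = some ⟨n - 1, by omega⟩ from rfl,
    FnLead_run_some_eq_none_iff]
  cases w with
  | nil => simp
  | cons a w => rw [List.isChain_cons_cons, and_iff_right (show a.val ≤ n - 1 + 1 by omega)]

theorem FnFdfa_progAccept_some (q : Fin n) {y : List (Fin n)} {s b : Fin n}
    (hs : y.min? = some s) (hb : y.max? = some b) :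
    (FnFdfa n hn).progAccept (some q) y ↔ Even (b.val - s.val) := by
  have hs_le : s ≤ ⟨n - 1, by omega⟩ := Fin.le_def.2 (Nat.le_sub_one_of_lt s.isLt)
  have hb_ge : (⟨0, hn⟩ : Fin n) ≤ b := Fin.le_def.2 (Nat.zero_le _)
  show y.foldl (fun p σ => (min p.1 σ, max p.2 σ)) (⟨n - 1, by omega⟩, ⟨0, hn⟩)
    ∈ {p : Fin n × Fin n | Even (p.2.val - p.1.val)} ↔ _
  rw [List.foldl_min_max, List.foldl_min, List.foldl_max, hs, hb]
  simp only [Option.getD_some, Set.mem_ofPred_eq]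
  rw [inf_eq_right.2 hs_le, sup_eq_right.2 hb_ge]

end Fn

section Interval

variable {n : ℕ} [Inhabited (Fin n)] {u v : List (Fin n)}

theorem mem_iff_mem_Icc_of_upWord_step (hv : v ≠ [])
    (hstep : ∀ p, (upWord u v (p + 1)).val ≤ (upWord u v p).val + 1) {s b : Fin n}
    (hs : v.min? = some s) (hb : v.max? = some b) (a : Fin n) :
    a ∈ v ↔ a ∈ Set.Icc s b := by
  rw [List.min?_eq_some_iff] at hs
  rw [List.max?_eq_some_iff] at hb
  refine ⟨fun ha => ⟨hs.2 a ha, hb.2 a ha⟩, fun ⟨hsa, hab⟩ => ?_⟩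
  obtain ⟨ks, hks, hvs⟩ := List.mem_iff_getElem.1 hs.1
  obtain ⟨kb, hkb, hvb⟩ := List.mem_iff_getElem.1 hb.1
  have hws := upWord_length_add u v hks 0
  have hwb := upWord_length_add u v hkb 1
  obtain ⟨p, hp, hpa⟩ := Nat.exists_mem_Icc_eq_of_succ_le (f := fun p => (upWord u v p).val)
    hstep (a := u.length + (0 * v.length + ks)) (b := u.length + (1 * v.length + kb)) (c := a.val)
    (by omega) (by rw [hws, hvs]; exact hsa) (by rw [hwb, hvb]; exact hab)
  exact Fin.ext hpa ▸ upWord_mem u hv (by have := hp.1; omega)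

theorem ncard_infinitely_often_upWord (hv : v ≠ [])
    (hstep : ∀ p, (upWord u v (p + 1)).val ≤ (upWord u v p).val + 1) {s b : Fin n}
    (hs : v.min? = some s) (hb : v.max? = some b) :
    {a : Fin n | {p : ℕ | upWord u v p = a}.Infinite}.ncard = b.val + 1 - s.val := by
  have hset : {a : Fin n | {p : ℕ | upWord u v p = a}.Infinite} = Set.Icc s b := by
    ext a
    rw [Set.mem_ofPred_eq, infinite_setOf_upWord_eq_iff u hv,
      mem_iff_mem_Icc_of_upWord_step hv hstep hs hb]
  rw [hset, ← Finset.coe_Icc, Set.ncard_coe_finset, Fin.card_Icc]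

end Interval

section Accept

variable {n : ℕ} (hn : 0 < n) [Inhabited (Fin n)] {u v : List (Fin n)}

theorem FnFdfa_not_accept_of_step_gt (hv : v ≠ []) {p : ℕ}
    (hp : (upWord u v p).val + 1 < (upWord u v (p + 1)).val) : ¬ (FnFdfa n hn).Accept u v := by
  set A := FnLead n hn
  have hdead : A.eval ((A.normalize u v).1 ++ wpow (A.normalize u v).2 (p + 2)) = none := by
    rw [FnLead_eval_eq_none_iff, A.normalize_append_wpow,
      List.isChain_iff_of_prefOf (prefOf_append_wpow_upWord u v _)]
    push Not
    refine ⟨p, ?_, hp⟩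
    have h1 := Nat.le_mul_of_pos_left (p + 2) (A.normJ_pos u v)
    have h2 := Nat.le_mul_of_pos_right (A.normI u v + A.normJ u v * (p + 2))
      (List.length_pos_iff.2 hv)
    rw [List.length_append, wpow_length]
    omega
  intro hacc
  change (FnFdfa n hn).progAccept (A.eval (A.normalize u v).1) (A.normalize u v).2 at hacc
  rw [← A.eval_normalize_append_wpow u v (p + 2), hdead] at hacc
  exact hacc

theorem FnFdfa_accept_iff_of_step
    (hstep : ∀ p, (upWord u v (p + 1)).val ≤ (upWord u v p).val + 1) {s b : Fin n}
    (hs : v.min? = some s) (hb : v.max? = some b) :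
    (FnFdfa n hn).Accept u v ↔ Even (b.val - s.val) := by
  have halive : (FnLead n hn).eval ((FnLead n hn).normalize u v).1 ≠ none := by
    refine fun hdead => (FnLead_eval_eq_none_iff hn _).1 hdead ?_
    exact (List.isChain_iff_of_prefOf (prefOf_append_wpow_upWord u v _)).2 fun p _ => hstep p
  obtain ⟨q, hq⟩ := Option.ne_none_iff_exists'.1 halive
  have hmem : ∀ a, a ∈ ((FnLead n hn).normalize u v).2 ↔ a ∈ v :=
    fun a => mem_wpow ((FnLead n hn).normJ_pos u v).ne'
  change (FnFdfa n hn).progAccept ((FnLead n hn).eval ((FnLead n hn).normalize u v).1)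
    ((FnLead n hn).normalize u v).2 ↔ _
  rw [hq]
  refine FnFdfa_progAccept_some hn q ?_ ?_
  · simpa only [List.min?_eq_some_iff, hmem] using hs
  · simpa only [List.max?_eq_some_iff, hmem] using hb

theorem FnFdfa_accept_iff_mem_LnSet (hv : v ≠ []) :
    (FnFdfa n hn).Accept u v ↔ upWord u v ∈ LnSet n := by
  by_cases hstep : ∀ p, (upWord u v (p + 1)).val ≤ (upWord u v p).val + 1
  · obtain ⟨s, hs⟩ := Option.ne_none_iff_exists'.1 (List.min?_eq_none_iff.not.2 hv)
    obtain ⟨b, hb⟩ := Option.ne_none_iff_exists'.1 (List.max?_eq_none_iff.not.2 hv)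
    have hsb : s ≤ b := (List.max?_eq_some_iff.1 hb).2 s (List.min?_mem hs)
    rw [FnFdfa_accept_iff_of_step hn hstep hs hb, LnSet, Set.mem_ofPred_eq,
      ncard_infinitely_often_upWord hv hstep hs hb, Nat.sub_add_comm hsb, Nat.odd_add_one,
      Nat.not_odd_iff_even]
    exact (and_iff_right hstep).symm
  · push Not at hstep
    obtain ⟨p, hp⟩ := hstep
    exact iff_of_false (FnFdfa_not_accept_of_step_gt hn hv hp) fun hw => hp.not_ge (hw.1 p)

end Accept

/-- For every `n ≥ 1`, the FDFA `F_n` is saturated and characterizes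
`L_n`: it accepts `(u,v)` iff `u·v^ω ∈ L_n`. -/
theorem Fn_saturated_and_characterizes (n : ℕ) (hn : 0 < n) :
    haveI : Inhabited (Fin n) := ⟨⟨0, hn⟩⟩
    (FnFdfa n hn).Saturated ∧
    ∀ u v : List (Fin n), v ≠ [] →
      ((FnFdfa n hn).Accept u v ↔ upWord u v ∈ LnSet n) := by
  let _ : Inhabited (Fin n) := ⟨⟨0, hn⟩⟩
  refine ⟨fun u v u' v' hv hv' huv => ?_, fun u v hv => FnFdfa_accept_iff_mem_LnSet hn hv⟩
  rw [FnFdfa_accept_iff_mem_LnSet hn hv, FnFdfa_accept_iff_mem_LnSet hn hv', huv]
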